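/- arXiv:2106.15480 — 2 statements merged into one kernel-verified Lean document; each statement's English description precedes it below -/
import Mathlib

section
/- For σ ∈ (0,1) and fixed N ≥ 0, γ_N^{(M)} / M^σ → Γ(1-σ) as M → ∞, where γ_N^{(M)} = σ Σ_{m=1}^M B(1-σ, N+m). -/
open Real Filter Topology

/-- The Beta function `B(x,y) = Γ(x)Γ(y)/Γ(x+y)`. -/
noncomputable def betaFn (x y : ℝ) : ℝ := Real.Gamma x * Real.Gamma y / Real.Gamma (x + y)

lemma Gamma_add_nat_aux (x : ℝ) (hx : 0 < x) (n : ℕ) :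
    Real.Gamma (x + n) = Real.Gamma x * ∏ j ∈ Finset.range n, (x + j) := by
  induction n with
  | zero => simp
  | succ n ih =>
    have h1 : x + (n + 1 : ℕ) = (x + n) + 1 := by push_cast; ring
    have h2 : x + (n : ℝ) ≠ 0 := by positivity
    rw [h1, Real.Gamma_add_one h2, ih, Finset.prod_range_succ]
    ring

/-- The key asymptotic: `Γ(n+1)/Γ(n+1-σ) / n^σ → 1`. -/
lemma ratio_tendsto (σ : ℝ) (hσ0 : 0 < σ) (hσ1 : σ < 1) :
    Tendsto (fun n : ℕ =>
      Real.Gamma ((n : ℝ) + 1) / Real.Gamma ((n : ℝ) + 1 - σ) / (n : ℝ) ^ σ)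
      atTop (𝓝 1) := by
  have hσ : 0 < 1 - σ := by linarith
  have hΓ : 0 < Real.Gamma (1 - σ) := Real.Gamma_pos_of_pos hσ
  have hlim : Tendsto (fun n : ℕ =>
      Real.GammaSeq (1 - σ) n * ((1 - σ + n) / ((n : ℝ) * Real.Gamma (1 - σ))))
      atTop (𝓝 1) := by
    have h2 : Tendsto (fun n : ℕ => (1 - σ + n) / ((n : ℝ) * Real.Gamma (1 - σ)))
        atTop (𝓝 (Real.Gamma (1 - σ))⁻¹) := by
      have : ∀ᶠ n : ℕ in atTop, (1 - σ + n) / ((n : ℝ) * Real.Gamma (1 - σ))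
          = ((1 - σ) / n + 1) * (Real.Gamma (1 - σ))⁻¹ := by
        filter_upwards [eventually_gt_atTop 0] with n hn
        have hn' : (n : ℝ) ≠ 0 := by positivity
        field_simp
      rw [tendsto_congr' this]
      have h3 : Tendsto (fun n : ℕ => (1 - σ) / (n : ℝ) + 1) atTop (𝓝 1) := by
        have := (tendsto_const_nhds (x := (1 - σ)) (f := atTop (α := ℕ))).div_atTop
          tendsto_natCast_atTop_atTop
        simpa using this.add tendsto_const_nhds
      simpa using h3.mul_const (Real.Gamma (1 - σ))⁻¹
    have := (Real.GammaSeq_tendsto_Gamma (1 - σ)).mul h2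
    rwa [mul_inv_cancel₀ hΓ.ne'] at this
  refine hlim.congr' ?_
  filter_upwards [eventually_gt_atTop 0] with n hn
  have hn0 : (0 : ℝ) < n := by exact_mod_cast hn
  have hfac : Real.Gamma ((n : ℝ) + 1) = (Nat.factorial n : ℝ) := Real.Gamma_nat_eq_factorial n
  have hden : Real.Gamma ((n : ℝ) + 1 - σ)
      = Real.Gamma (1 - σ) * ∏ j ∈ Finset.range n, (1 - σ + j) := by
    have : (n : ℝ) + 1 - σ = (1 - σ) + n := by ring
    rw [this, Gamma_add_nat_aux _ hσ]
  have hprod : 0 < ∏ j ∈ Finset.range n, (1 - σ + (j : ℝ)) := by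
    apply Finset.prod_pos
    intro j _
    have : (0 : ℝ) ≤ j := Nat.cast_nonneg j
    linarith
  have hseq : Real.GammaSeq (1 - σ) n
      = (n : ℝ) ^ (1 - σ : ℝ) * (Nat.factorial n : ℝ) / ((∏ j ∈ Finset.range n, (1 - σ + j)) * (1 - σ + n)) := by
    rw [Real.GammaSeq, Finset.prod_range_succ]
  have hpow : (n : ℝ) ^ (1 - σ : ℝ) * (n : ℝ) ^ σ = n := by
    rw [← Real.rpow_add hn0]
    simp
  have h1σn : (0 : ℝ) < 1 - σ + n := by linarith
  have hnσ : (0 : ℝ) < (n : ℝ) ^ σ := Real.rpow_pos_of_pos hn0 σ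
  rw [hseq, hfac, hden]
  set a := (n : ℝ) ^ (1 - σ : ℝ) with ha
  set b := (n : ℝ) ^ σ with hb
  have ha0 : 0 < a := Real.rpow_pos_of_pos hn0 _
  have hb0 : 0 < b := hnσ
  set P := ∏ j ∈ Finset.range n, (1 - σ + (j : ℝ)) with hP
  have h : a * (Nat.factorial n : ℝ) / (P * (1 - σ + ↑n)) * ((1 - σ + ↑n) / (↑n * Real.Gamma (1 - σ)))
      = (Nat.factorial n : ℝ) * a / (P * ↑n * Real.Gamma (1 - σ)) := by
    field_simp
  rw [h, ← hpow]
  field_simp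

/-- For `σ ∈ (0,1)` and fixed `N ≥ 0`,
`γ_N^(M) / M^σ → Γ(1-σ)` as `M → ∞`, where `γ_N^(M) = σ Σ_{m=1}^M B(1-σ, N+m)`. -/
theorem stmt_8 (σ : ℝ) (hσ0 : 0 < σ) (hσ1 : σ < 1) (N : ℕ) :
    Tendsto (fun M : ℕ =>
        (σ * ∑ m ∈ Finset.Icc 1 M, betaFn (1 - σ) ((N : ℝ) + m)) / (M : ℝ) ^ σ)
      atTop (𝓝 (Real.Gamma (1 - σ))) := by
  have hσ : 0 < 1 - σ := by linarith
  have hΓ : 0 < Real.Gamma (1 - σ) := Real.Gamma_pos_of_pos hσ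
  set G : ℕ → ℝ := fun n => Real.Gamma ((n : ℝ) + 1) / Real.Gamma ((n : ℝ) + 1 - σ) with hG
  -- telescoping identity
  have htel : ∀ M : ℕ, σ * ∑ m ∈ Finset.Icc 1 M, betaFn (1 - σ) ((N : ℝ) + m)
      = Real.Gamma (1 - σ) * (G (N + M) - G N) := by
    intro M
    induction M with
    | zero => simp
    | succ M ih =>
      rw [Finset.sum_Icc_succ_top (by omega), mul_add, ih]
      have key : σ * betaFn (1 - σ) ((N : ℝ) + (M + 1 : ℕ))
          = Real.Gamma (1 - σ) * (G (N + (M + 1)) - G (N + M)) := by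
        set n : ℝ := (N : ℝ) + M with hn
        have hcast1 : ((N + (M + 1) : ℕ) : ℝ) = n + 1 := by push_cast; ring
        have hcast2 : ((N + M : ℕ) : ℝ) = n := by push_cast; ring
        have hcast3 : (N : ℝ) + ((M + 1 : ℕ) : ℝ) = n + 1 := by push_cast; ring
        have hn0 : 0 ≤ n := by positivity
        clear_value n
        have h1 : (0 : ℝ) < n + 1 - σ := by linarith
        have h2 : (0 : ℝ) < n + 2 - σ := by linarith
        have hΓ1 : 0 < Real.Gamma (n + 1 - σ) := Real.Gamma_pos_of_pos h1
        have hΓ2 : 0 < Real.Gamma (n + 2 - σ) := Real.Gamma_pos_of_pos h2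
        have hrec1 : Real.Gamma (n + 2 - σ) = (n + 1 - σ) * Real.Gamma (n + 1 - σ) := by
          have : n + 2 - σ = (n + 1 - σ) + 1 := by ring
          rw [this, Real.Gamma_add_one h1.ne']
        have hrec2 : Real.Gamma (n + 1 + 1) = (n + 1) * Real.Gamma (n + 1) := by
          rw [Real.Gamma_add_one (by positivity)]
        have harg : (1 - σ) + ((N : ℝ) + ((M + 1 : ℕ) : ℝ)) = n + 2 - σ := by
          rw [hcast3]; ring
        rw [hG]
        simp only [hcast1, hcast2]
        have e1 : n + 1 + 1 - σ = n + 2 - σ := by ring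
        rw [betaFn, harg, hcast3, e1, hrec1, hrec2]
        have hΓn1 : (0 : ℝ) < Real.Gamma (n + 1) := Real.Gamma_pos_of_pos (by positivity)
        field_simp
        ring
      rw [key]
      ring
  simp only [htel]
  -- now the limit
  have hMσ : Tendsto (fun M : ℕ => (M : ℝ) ^ σ) atTop atTop :=
    (tendsto_rpow_atTop hσ0).comp tendsto_natCast_atTop_atTop
  have hconst : Tendsto (fun M : ℕ => Real.Gamma (1 - σ) * G N / (M : ℝ) ^ σ) atTop (𝓝 0) :=
    tendsto_const_nhds.div_atTop hMσ
  have hmain : Tendsto (fun M : ℕ => Real.Gamma (1 - σ) * G (N + M) / (M : ℝ) ^ σ)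
      atTop (𝓝 (Real.Gamma (1 - σ))) := by
    have hcomp : Tendsto (fun M : ℕ => N + M) atTop atTop := by
      simpa [Nat.add_comm] using tendsto_add_atTop_nat N
    have hratio : Tendsto (fun M : ℕ => G (N + M) / ((N + M : ℕ) : ℝ) ^ σ) atTop (𝓝 1) :=
      (ratio_tendsto σ hσ0 hσ1).comp hcomp
    have hcorr : Tendsto (fun M : ℕ => (((N + M : ℕ) : ℝ) / M) ^ σ) atTop (𝓝 1) := by
      have h1 : Tendsto (fun M : ℕ => ((N + M : ℕ) : ℝ) / M) atTop (𝓝 1) := by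
        have : ∀ᶠ M : ℕ in atTop, ((N + M : ℕ) : ℝ) / M = (N : ℝ) / M + 1 := by
          filter_upwards [eventually_gt_atTop 0] with M hM
          have : (M : ℝ) ≠ 0 := by positivity
          push_cast
          field_simp
        rw [tendsto_congr' this]
        have := (tendsto_const_nhds (x := (N : ℝ)) (f := atTop (α := ℕ))).div_atTop
          tendsto_natCast_atTop_atTop
        simpa using this.add tendsto_const_nhds
      have := h1.rpow (tendsto_const_nhds (x := σ)) (Or.inl one_ne_zero)
      simpa using this
    have heq : ∀ᶠ M : ℕ in atTop,
        G (N + M) / ((N + M : ℕ) : ℝ) ^ σ * (((N + M : ℕ) : ℝ) / M) ^ σ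
          = G (N + M) / (M : ℝ) ^ σ := by
      filter_upwards [eventually_gt_atTop 0] with M hM
      have hM0 : (0 : ℝ) < M := by exact_mod_cast hM
      have hNM : (0 : ℝ) < ((N + M : ℕ) : ℝ) := by positivity
      rw [Real.div_rpow hNM.le hM0.le]
      have h1 : ((N + M : ℕ) : ℝ) ^ σ ≠ 0 := by positivity
      have h2 : (M : ℝ) ^ σ ≠ 0 := by positivity
      field_simp
    have := (hratio.mul hcorr).congr' heq
    rw [mul_one] at this
    have := this.const_mul (Real.Gamma (1 - σ))
    simpa [mul_div_assoc, mul_one] using this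
  have := hmain.sub hconst
  rw [sub_zero] at this
  refine this.congr (fun M => ?_)
  ring
end

section
/- Let N be a positive integer and C ≠ 0 a constant. All positive continuously differentiable solutions λ on (0,∞) of the ODE λ(a)(1 - N C) = a λ'(a) C are of the form λ(a) = α a^{(1-NC)/C} for some α > 0. Moreover, if additionally ∫_0^∞ min(1, a) λ(a) da < ∞, then the exponent (1-NC)/C lies in (-2,-1); that is, λ(a) = α a^{-1-σ} for some σ ∈ (0,1). -/
open MeasureTheory Real Set

/-- Characterization of power-law Lévy intensities: all positive `C¹` solutions on `(0,∞)` of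
`λ(a)(1 - N C) = a λ'(a) C` are `λ(a) = α a^((1-NC)/C)`; and the Lévy integrability condition
`∫_0^∞ min(1,a) λ(a) da < ∞` forces the exponent `(1-NC)/C` to lie in `(-2,-1)`, i.e.
`λ(a) = α a^(-1-σ)` with `σ ∈ (0,1)`. -/
theorem stmt_16 (N : ℕ) (hN : 1 ≤ N) (C : ℝ) (hC : C ≠ 0)
    (lam lam' : ℝ → ℝ) (hpos : ∀ a ∈ Ioi (0 : ℝ), 0 < lam a)
    (hderiv : ∀ a ∈ Ioi (0 : ℝ), HasDerivAt lam (lam' a) a)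
    (hcont : ContinuousOn lam' (Ioi (0 : ℝ)))
    (hode : ∀ a ∈ Ioi (0 : ℝ), lam a * (1 - (N : ℝ) * C) = a * lam' a * C) :
    (∃ α : ℝ, 0 < α ∧ ∀ a ∈ Ioi (0 : ℝ), lam a = α * a ^ ((1 - (N : ℝ) * C) / C)) ∧
    (IntegrableOn (fun a => min 1 a * lam a) (Ioi (0 : ℝ)) →
      (-2 < (1 - (N : ℝ) * C) / C ∧ (1 - (N : ℝ) * C) / C < -1) ∧
      ∃ α σ : ℝ, 0 < α ∧ 0 < σ ∧ σ < 1 ∧ ∀ a ∈ Ioi (0 : ℝ), lam a = α * a ^ (-1 - σ)) := by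
  set k : ℝ := (1 - (N : ℝ) * C) / C with hk
  -- derivative relation
  have hlam' : ∀ a ∈ Ioi (0 : ℝ), lam' a = lam a * k / a := by
    intro a ha
    have ha0 : a ≠ 0 := ne_of_gt ha
    have := hode a ha
    field_simp [hk]
    rw [hk]
    field_simp
    linarith
  -- the auxiliary function g a = lam a * a ^ (-k)
  set g : ℝ → ℝ := fun x => lam x * x ^ (-k) with hg
  have hgderiv : ∀ a ∈ Ioi (0 : ℝ), HasDerivAt g 0 a := by
    intro a ha
    have ha0 : (a : ℝ) ≠ 0 := ne_of_gt ha
    have h1 : HasDerivAt (fun x : ℝ => x ^ (-k)) (-k * a ^ (-k - 1)) a :=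
      Real.hasDerivAt_rpow_const (Or.inl ha0)
    have h2 := (hderiv a ha).mul h1
    have e : lam' a * a ^ (-k) + lam a * (-k * a ^ (-k - 1)) = 0 := by
      rw [hlam' a ha, Real.rpow_sub_one ha0]
      field_simp
      ring
    exact e ▸ h2
  have hconst : ∀ x ∈ Ioi (0 : ℝ), ∀ y ∈ Ioi (0 : ℝ), g x = g y := by
    intro x hx y hy
    refine (convex_Ioi (0 : ℝ)).is_const_of_fderivWithin_eq_zero
      (fun z hz => ((hgderiv z hz).differentiableAt).differentiableWithinAt) ?_ hx hy
    intro z hz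
    rw [fderivWithin_of_isOpen isOpen_Ioi hz, ((hgderiv z hz).hasFDerivAt).fderiv]
    ext w
    simp
  have hα : ∀ a ∈ Ioi (0 : ℝ), lam a = lam 1 * a ^ k := by
    intro a ha
    have ha0 : (a : ℝ) ≠ 0 := ne_of_gt ha
    have := hconst a ha 1 (by norm_num)
    simp only [hg, Real.one_rpow, mul_one] at this
    have h2 : lam a * a ^ (-k) * a ^ k = lam 1 * a ^ k := by rw [this]
    rwa [mul_assoc, ← Real.rpow_add ha, neg_add_cancel, Real.rpow_zero, mul_one] at h2
  have hα1 : 0 < lam 1 := hpos 1 (by norm_num)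
  refine ⟨⟨lam 1, hα1, hα⟩, ?_⟩
  intro hint
  -- k < -1 from integrability on Ioi 1
  have hk1 : k < -1 := by
    have h1 : IntegrableOn (fun a => lam 1 * a ^ k) (Ioi (1 : ℝ)) := by
      refine ((hint.mono_set (Ioi_subset_Ioi zero_le_one)).congr_fun ?_ measurableSet_Ioi)
      intro a ha
      have ha1 : (1 : ℝ) ≤ a := le_of_lt ha
      simp only [min_eq_left ha1, one_mul]
      exact hα a (show (0:ℝ) < a from lt_trans zero_lt_one ha)
    have h2 : IntegrableOn (fun a : ℝ => a ^ k) (Ioi (1 : ℝ)) := by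
      have := h1.const_mul (lam 1)⁻¹
      simpa [← mul_assoc, inv_mul_cancel₀ (ne_of_gt hα1), IntegrableOn] using this
    exact (integrableOn_Ioi_rpow_iff zero_lt_one).1 h2
  -- -2 < k from integrability on Ioo 0 1
  have hk2 : -2 < k := by
    have h1 : IntegrableOn (fun a => lam 1 * a ^ (k + 1)) (Ioo (0 : ℝ) 1) := by
      refine ((hint.mono_set Ioo_subset_Ioi_self).congr_fun ?_ measurableSet_Ioo)
      intro a ha
      simp only [min_eq_right (le_of_lt ha.2), hα a ha.1,
        Real.rpow_add ha.1, Real.rpow_one]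
      ring
    have h2 : IntegrableOn (fun a : ℝ => a ^ (k + 1)) (Ioo (0 : ℝ) 1) := by
      have := h1.const_mul (lam 1)⁻¹
      simpa [← mul_assoc, inv_mul_cancel₀ (ne_of_gt hα1), IntegrableOn] using this
    have := (intervalIntegral.integrableOn_Ioo_rpow_iff zero_lt_one).1 h2
    linarith
  refine ⟨⟨hk2, hk1⟩, lam 1, -1 - k, hα1, by linarith, by linarith, ?_⟩
  intro a ha
  have := hα a ha
  rwa [show (-1 - (-1 - k)) = k by ring]
end
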